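/- Let α > 0 and ω > 0, and define u(x,t) = 2α√ω (√(α²+ω) + √ω) e^{x√ω + iωt} / ( α²(e^{2x√ω} − 1) + 2√ω (√(α²+ω) + √ω) e^{2x√ω} ). Then |u(x,t)| ≤ α e^{−x√ω} for all x ≥ 0 and t ∈ ℝ. In particular, ∫₀^∞ |u(x,t)| dx ≤ α/√ω for every t, so the L¹-norm of u(·,t) over [0,∞) is bounded uniformly in t. -/

import Mathlib

/-!
Since `|e^{iωt}| = 1`, `|u(x,t)|` is a positive multiple of `e^{x√ω}` divided by the denominator,
and for `x ≥ 0` the term `α²(e^{2x√ω} - 1)` of the denominator is nonnegative. Dropping it leaves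
exactly `α e^{-x√ω}`, whose integral over `(0, ∞)` is `α/√ω`.
-/

open MeasureTheory Set

noncomputable section

/-- The explicit function
`u(x,t) = 2α√ω(√(α²+ω)+√ω) e^{x√ω + iωt} / (α²(e^{2x√ω}-1) + 2√ω(√(α²+ω)+√ω)e^{2x√ω})`. -/
def uExact (α ω : ℝ) : ℝ → ℝ → ℂ := fun x t =>
  ((2 * α * Real.sqrt ω * (Real.sqrt (α ^ 2 + ω) + Real.sqrt ω) : ℝ) : ℂ) *
      Complex.exp ((x * Real.sqrt ω : ℝ) + Complex.I * ω * t) /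
    (((α ^ 2 : ℝ) : ℂ) * (Complex.exp ((2 * x * Real.sqrt ω : ℝ) : ℂ) - 1) +
      ((2 * Real.sqrt ω * (Real.sqrt (α ^ 2 + ω) + Real.sqrt ω) : ℝ) : ℂ) *
        Complex.exp ((2 * x * Real.sqrt ω : ℝ) : ℂ))

open Real

theorem mul_mul_exp_div_le_mul_exp_neg {a b c y : ℝ} (ha : 0 ≤ a) (hb : 0 ≤ b) (hc : 0 ≤ c) :
    c * b * exp y / (a + b * exp (2 * y)) ≤ c * exp (-y) := by
  refine div_le_of_le_mul₀ (by positivity) (by positivity) ?_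
  have hexp : exp (-y) * exp (2 * y) = exp y := by rw [← exp_add]; ring_nf
  calc c * b * exp y = c * exp (-y) * (b * exp (2 * y)) := by rw [← hexp]; ring
    _ ≤ c * exp (-y) * (a + b * exp (2 * y)) := by gcongr; linarith

theorem norm_uExact (α ω x t : ℝ) :
    ‖uExact α ω x t‖ = |2 * α * √ω * (√(α ^ 2 + ω) + √ω)| * exp (x * √ω) /
      |α ^ 2 * (exp (2 * x * √ω) - 1) + 2 * √ω * (√(α ^ 2 + ω) + √ω) * exp (2 * x * √ω)| := by
  have hre : ((x * √ω : ℝ) + Complex.I * ω * t : ℂ).re = x * √ω := by simp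
  have hden : ((α ^ 2 : ℝ) : ℂ) * (Complex.exp ((2 * x * √ω : ℝ) : ℂ) - 1) +
      ((2 * √ω * (√(α ^ 2 + ω) + √ω) : ℝ) : ℂ) * Complex.exp ((2 * x * √ω : ℝ) : ℂ) =
      ((α ^ 2 * (exp (2 * x * √ω) - 1) +
        2 * √ω * (√(α ^ 2 + ω) + √ω) * exp (2 * x * √ω) : ℝ) : ℂ) := by
    push_cast; ring
  rw [uExact, hden, norm_div, norm_mul, Complex.norm_exp, hre, Complex.norm_real,
    Complex.norm_real, Real.norm_eq_abs, Real.norm_eq_abs]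

theorem norm_uExact_le {α x : ℝ} (hα : 0 ≤ α) (hx : 0 ≤ x) (ω t : ℝ) :
    ‖uExact α ω x t‖ ≤ α * exp (-(x * √ω)) := by
  have hE : 1 ≤ exp (2 * x * √ω) := one_le_exp (by positivity)
  have hb : 0 ≤ 2 * √ω * (√(α ^ 2 + ω) + √ω) := by positivity
  have ha : 0 ≤ α ^ 2 * (exp (2 * x * √ω) - 1) := mul_nonneg (sq_nonneg α) (by linarith)
  rw [norm_uExact, abs_of_nonneg (by positivity), abs_of_nonneg (by positivity)]
  convert mul_mul_exp_div_le_mul_exp_neg ha hb hα using 3 <;> ring_nf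

theorem setIntegral_Ioi_le_of_le_mul_exp_neg {f : ℝ → ℝ} {c s : ℝ} (hs : 0 < s)
    (hf_nonneg : ∀ x, 0 ≤ f x) (hf_le : ∀ x > 0, f x ≤ c * exp (-(x * s))) :
    ∫ x in Ioi 0, f x ≤ c / s := by
  have hexp : (fun x => exp (-s * x)) = fun x => exp (-(x * s)) := by
    funext x; ring_nf
  have hint : IntegrableOn (fun x => exp (-(x * s))) (Ioi 0) := by
    simpa only [hexp] using integrableOn_exp_mul_Ioi (neg_neg_of_pos hs) 0
  calc ∫ x in Ioi 0, f x ≤ ∫ x in Ioi 0, c * exp (-(x * s)) :=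
        integral_mono_of_nonneg (ae_of_all _ hf_nonneg) (hint.const_mul c)
          ((ae_restrict_mem measurableSet_Ioi).mono hf_le)
    _ = c / s := by
        rw [integral_const_mul, ← hexp, integral_exp_mul_Ioi (neg_neg_of_pos hs),
          mul_zero, exp_zero, neg_div_neg_eq, mul_one_div]

/-- For `α > 0`, `ω > 0`, the explicit solution satisfies `|u(x,t)| ≤ α e^{-x√ω}` for all
`x ≥ 0`, `t ∈ ℝ`; in particular its `L¹(0,∞)`-norm in `x` is bounded by `α/√ω`, uniformly
in `t`. -/
theorem uExact_decay_bound (α ω : ℝ) (hα : 0 < α) (hω : 0 < ω) :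
    (∀ x ≥ (0:ℝ), ∀ t : ℝ, ‖uExact α ω x t‖ ≤ α * Real.exp (-(x * Real.sqrt ω))) ∧
    (∀ t : ℝ, (∫ x in Set.Ioi (0:ℝ), ‖uExact α ω x t‖) ≤ α / Real.sqrt ω) :=
  ⟨fun _ hx t => norm_uExact_le hα.le hx ω t, fun t =>
    setIntegral_Ioi_le_of_le_mul_exp_neg (sqrt_pos.mpr hω) (fun _ => norm_nonneg _)
      fun _ hx => norm_uExact_le hα.le hx.le ω t⟩

end
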